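/- arXiv:2302.04640 — 7 statements merged into one kernel-verified Lean document; each statement's English description precedes it below -/
import Mathlib

section
/- For all integers i ≥ 1, if i is even then F_{i+2}/F_i > α² + 1/F_{2i} and F_{i+2}/F_i < α² + 1/(F_{2i} - 1); if i is odd then F_{i+2}/F_i > α² - 1/F_{2i} and F_{i+2}/F_i < α² - 1/(F_{2i} + 1}. Equivalently, α² + (-1)^i/F_{2i} < F_{i+2}/F_i < α² + (-1)^i/(F_{2i} - (-1)^i). -/
open Real goldenRatio

set_option maxHeartbeats 1000000 in
/-- For `i ≥ 1`: `α² + (-1)^i/F_{2i} < F_{i+2}/F_i < α² + (-1)^i/(F_{2i} - (-1)^i)`. -/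
theorem fib_ratio_estimate (i : ℕ) (hi : 1 ≤ i) :
    ((1 + Real.sqrt 5) / 2) ^ 2 + (-1 : ℝ) ^ i / (Nat.fib (2 * i) : ℝ)
      < (Nat.fib (i + 2) : ℝ) / (Nat.fib i : ℝ) ∧
    (Nat.fib (i + 2) : ℝ) / (Nat.fib i : ℝ)
      < ((1 + Real.sqrt 5) / 2) ^ 2 + (-1 : ℝ) ^ i / ((Nat.fib (2 * i) : ℝ) - (-1 : ℝ) ^ i) := by
  have hs : (0:ℝ) < Real.sqrt 5 := by positivity
  have hs2 : Real.sqrt 5 ^ 2 = 5 := Real.sq_sqrt (by norm_num)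
  have hsgt : (2:ℝ) < Real.sqrt 5 := by nlinarith
  have hgold : ((1 + Real.sqrt 5) / 2) = φ := rfl
  have hF : (0:ℝ) < (Nat.fib i : ℝ) := by
    exact_mod_cast Nat.fib_pos.mpr hi
  set A : ℝ := φ ^ i * (Nat.fib i : ℝ) with hA
  set B : ℝ := (Nat.fib (2*i) : ℝ) with hB
  have hApos : 0 < A := mul_pos (pow_pos goldenRatio_pos i) hF
  have hBpos : (0:ℝ) < B := by
    rw [hB]; exact_mod_cast Nat.fib_pos.mpr (by omega)
  have hAval : A = (φ ^ (2*i) - (-1:ℝ)^i) / Real.sqrt 5 := by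
    rw [hA, Real.coe_fib_eq, two_mul, pow_add, ← goldenRatio_mul_goldenConj, mul_pow]
    field_simp
  have hBval : B = (φ ^ (2*i) - ψ ^ (2*i)) / Real.sqrt 5 := Real.coe_fib_eq _
  have hdiff : A - B = (ψ ^ (2*i) - (-1:ℝ)^i) / Real.sqrt 5 := by
    rw [hAval, hBval]; ring
  -- bounds on ψ^(2i)
  have hψ2 : ψ ^ 2 = (3 - Real.sqrt 5) / 2 := by
    rw [goldenConj_sq]; unfold goldenConj; ring
  have hψ2pos : 0 < ψ ^ 2 := by nlinarith [goldenConj_neg]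
  have hψ2lt1 : ψ ^ 2 < 1 := by rw [hψ2]; nlinarith
  have hp1 : 0 < ψ ^ (2*i) := by
    rw [pow_mul]; exact pow_pos hψ2pos i
  have hp2 : ψ ^ (2*i) ≤ ψ ^ 2 := by
    rw [pow_mul]
    exact pow_le_of_le_one hψ2pos.le hψ2lt1.le (by omega)
  have hψ2s : ψ ^ 2 + 1 < Real.sqrt 5 := by rw [hψ2]; nlinarith
  -- ratio identity
  have hfib : (Nat.fib (i+2) : ℝ) = φ^2 * (Nat.fib i : ℝ) + ψ ^ i := by
    have h1 := fib_succ_sub_goldenRatio_mul_fib i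
    have h2 : (Nat.fib (i+2):ℝ) = (Nat.fib (i+1):ℝ) + (Nat.fib i:ℝ) := by
      rw [Nat.fib_add_two]; push_cast; ring
    rw [h2, goldenRatio_sq, add_mul, one_mul]; linarith
  have hψi : ψ^i * φ^i = (-1:ℝ)^i := by rw [← mul_pow, goldenConj_mul_goldenRatio]
  have hratio : (Nat.fib (i+2):ℝ)/(Nat.fib i:ℝ) = φ^2 + (-1:ℝ)^i / A := by
    rw [hfib, add_div, mul_div_assoc, div_self hF.ne', mul_one, hA, ← hψi,
      mul_comm (ψ^i) (φ^i), mul_div_mul_left _ _ (pow_pos goldenRatio_pos i).ne']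
  rw [hgold, hratio]
  have key : (-1:ℝ)^i / B < (-1:ℝ)^i / A ∧ (-1:ℝ)^i / A < (-1:ℝ)^i / (B - (-1:ℝ)^i) := by
    rcases Nat.even_or_odd i with he | ho
    · -- even: e = 1, B - 1 < A < B
      have hei : (-1:ℝ)^i = 1 := he.neg_one_pow
      rw [hei]
      have hi2 : 2 ≤ i := by
        rcases he with ⟨k, hk⟩; omega
      have hB3 : (3:ℝ) ≤ B := by
        rw [hB]
        have : Nat.fib 4 ≤ Nat.fib (2*i) := Nat.fib_mono (by omega)
        exact_mod_cast le_trans (by norm_num) this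
      rw [hei] at hdiff
      have hlt1 : A < B := by
        have h1 : (ψ ^ (2*i) - 1) / Real.sqrt 5 < 0 :=
          div_neg_of_neg_of_pos (by linarith) hs
        linarith
      have hlt2 : B - 1 < A := by
        have h1 : (-1:ℝ) < (ψ ^ (2*i) - 1) / Real.sqrt 5 := by
          rw [lt_div_iff₀ hs]; nlinarith
        linarith
      constructor
      · exact one_div_lt_one_div_of_lt hApos hlt1
      · exact one_div_lt_one_div_of_lt (by linarith) hlt2
    · -- odd: e = -1, B < A < B + 1
      have hei : (-1:ℝ)^i = -1 := ho.neg_one_pow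
      rw [hei]
      rw [hei] at hdiff
      have hlt1 : B < A := by
        have h1 : (0:ℝ) < (ψ ^ (2*i) - -1) / Real.sqrt 5 :=
          div_pos (by linarith) hs
        linarith
      have hlt2 : A < B + 1 := by
        have h1 : (ψ ^ (2*i) - -1) / Real.sqrt 5 < 1 := by
          rw [div_lt_one hs]; linarith
        linarith
      constructor
      · have h := one_div_lt_one_div_of_lt hBpos hlt1
        rw [neg_div, neg_div]
        linarith
      · have hbe : B - (-1:ℝ) = B + 1 := by ring
        rw [hbe]
        have h := one_div_lt_one_div_of_lt hApos hlt2
        rw [neg_div, neg_div]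
        linarith
  exact ⟨by linarith [key.1], by linarith [key.2]⟩
end

section
/- For all integers i ≥ 1, α² + 1/(F_{2i-1} + 2) < (F_{2i+1} + 1)/F_{2i-1} < α² + 1/F_{2i-1}. -/
lemma fib_aux1 (s a b p q : ℝ) (hs : s ≠ 0) (hsq : p ^ 2 - q ^ 2 = s) :
    (p ^ 3 * a - q ^ 3 * b) / s = p ^ 2 * ((p * a - q * b) / s) + q * b := by
  field_simp
  linear_combination (q * b) * hsq

lemma fib_aux2 (s a b p q : ℝ) (hs : s ≠ 0) (hpq : p * q = -1) (hab : a * b = 1) :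
    (q * b) * ((p * a - q * b) / s) = (-1 - (q * b) ^ 2) / s := by
  rw [← mul_div_assoc, div_eq_div_iff hs hs]
  linear_combination s * (a * b) * hpq - s * hab

lemma fib_ratio_aux (s F F2 c : ℝ) (hs2 : s ^ 2 = 5) (hsgt : 2 < s)
    (hFpos : 0 < F) (hcneg : c < 0) (hcl : (1 - s) / 2 ≤ c)
    (hF2 : F2 = ((1 + s) / 2) ^ 2 * F + c)
    (hcF : c * F = (-1 - c ^ 2) / s) :
    ((1 + s) / 2) ^ 2 + 1 / (F + 2) < (F2 + 1) / F ∧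
      (F2 + 1) / F < ((1 + s) / 2) ^ 2 + 1 / F := by
  have hspos : (0:ℝ) < s := by linarith
  have h2F : (0:ℝ) < F + 2 := by linarith
  have h7 : 15 < 7 * s := by nlinarith
  constructor
  · rw [lt_div_iff₀ hFpos, hF2]
    have hexp : (((1 + s) / 2) ^ 2 + 1 / (F + 2)) * F
        = ((1 + s) / 2) ^ 2 * F + F / (F + 2) := by
      field_simp
    rw [hexp]
    have key : F / (F + 2) < c + 1 := by
      rw [div_lt_iff₀ h2F]
      have hcF' : c * F = (-1 - c ^ 2) / s := hcF
      have hE : 0 < 2 * s + 2 * c * s - c ^ 2 - 1 := by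
        have hd : 0 ≤ c - (1 - s) / 2 := by linarith
        have hd2 : 0 ≤ 3 * s - 1 - (c - (1 - s) / 2) := by linarith
        nlinarith [mul_nonneg hd hd2]
      have hcFs : c * F * s = -1 - c ^ 2 := by
        rw [hcF']; field_simp
      nlinarith [mul_pos hspos h2F]
    linarith
  · rw [div_lt_iff₀ hFpos, hF2]
    have hexp : (((1 + s) / 2) ^ 2 + 1 / F) * F = ((1 + s) / 2) ^ 2 * F + 1 := by
      field_simp
    rw [hexp]
    linarith

/-- For `i ≥ 1`: `α² + 1/(F_{2i-1} + 2) < (F_{2i+1} + 1)/F_{2i-1} < α² + 1/F_{2i-1}`. -/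
theorem fib_ratio_estimate_two (i : ℕ) (hi : 1 ≤ i) :
    ((1 + Real.sqrt 5) / 2) ^ 2 + 1 / ((Nat.fib (2 * i - 1) : ℝ) + 2)
      < ((Nat.fib (2 * i + 1) : ℝ) + 1) / (Nat.fib (2 * i - 1) : ℝ) ∧
    ((Nat.fib (2 * i + 1) : ℝ) + 1) / (Nat.fib (2 * i - 1) : ℝ)
      < ((1 + Real.sqrt 5) / 2) ^ 2 + 1 / (Nat.fib (2 * i - 1) : ℝ) := by
  obtain ⟨j, rfl⟩ : ∃ j, i = j + 1 := ⟨i - 1, by omega⟩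
  have h1 : 2 * (j + 1) - 1 = 2 * j + 1 := by omega
  have h2 : 2 * (j + 1) + 1 = (2 * j + 1) + 2 := by omega
  rw [h1, h2]
  have hs2 : Real.sqrt 5 ^ 2 = 5 := Real.sq_sqrt (by norm_num)
  have hsgt : (2:ℝ) < Real.sqrt 5 := by nlinarith [Real.sqrt_nonneg 5]
  set s := Real.sqrt 5 with hs
  have hsne : s ≠ 0 := by linarith
  have hψneg : (1 - s) / 2 < 0 := by linarith
  have hfib : ∀ m : ℕ, (Nat.fib m : ℝ)
      = (((1 + s) / 2) ^ m - ((1 - s) / 2) ^ m) / s := fun m => Real.coe_fib_eq m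
  have hpowodd : ∀ x : ℝ, x ^ (2 * j + 1) = x * (x ^ 2) ^ j := fun x => by
    rw [pow_succ, pow_mul, mul_comm]
  have hpowodd3 : ∀ x : ℝ, x ^ (2 * j + 1 + 2) = x ^ 3 * (x ^ 2) ^ j := fun x => by
    rw [show 2 * j + 1 + 2 = 3 + 2 * j by ring, pow_add, pow_mul]
  set a := (((1 + s) / 2) ^ 2) ^ j with ha
  set b := (((1 - s) / 2) ^ 2) ^ j with hb
  have hφψ : ((1 + s) / 2) * ((1 - s) / 2) = -1 := by nlinarith
  have hab : a * b = 1 := by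
    rw [ha, hb, ← mul_pow]
    have h : ((1 + s) / 2) ^ 2 * ((1 - s) / 2) ^ 2 = 1 := by nlinarith
    rw [h, one_pow]
  have hbpos : 0 < b := pow_pos (by nlinarith) j
  have hb1 : b ≤ 1 := pow_le_one₀ (sq_nonneg _) (by nlinarith)
  have hF : (Nat.fib (2 * j + 1) : ℝ) = (((1 + s) / 2) * a - ((1 - s) / 2) * b) / s := by
    rw [hfib, hpowodd, hpowodd]
  have hF2 : (Nat.fib (2 * j + 1 + 2) : ℝ)
      = (((1 + s) / 2) ^ 3 * a - ((1 - s) / 2) ^ 3 * b) / s := by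
    rw [hfib, hpowodd3, hpowodd3]
  have hFpos : (0:ℝ) < (Nat.fib (2 * j + 1) : ℝ) := by
    exact_mod_cast Nat.fib_pos.mpr (by omega)
  set c := ((1 - s) / 2) * b with hc
  have hcneg : c < 0 := mul_neg_of_neg_of_pos hψneg hbpos
  have hcl : (1 - s) / 2 ≤ c := by nlinarith
  have hF2' : (Nat.fib (2 * j + 1 + 2) : ℝ)
      = ((1 + s) / 2) ^ 2 * (Nat.fib (2 * j + 1) : ℝ) + c := by
    rw [hF2, hF]
    exact fib_aux1 s a b _ _ hsne (by nlinarith)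
  have hcF : c * (Nat.fib (2 * j + 1) : ℝ) = (-1 - c ^ 2) / s := by
    rw [hF, hc]
    exact fib_aux2 s a b _ _ hsne hφψ hab
  exact fib_ratio_aux s _ _ c hs2 hsgt hFpos hcneg hcl hF2' hcF
end

section
/- For all integers k ≥ 4, (F_{k+1} + 1)² ≤ 3 * F_{2k-1}. -/
theorem fib_bound_i (k : ℕ) (hk : 4 ≤ k) :
    (Nat.fib (k + 1) + 1) ^ 2 ≤ 3 * Nat.fib (2 * k - 1) := by
  obtain ⟨n, rfl⟩ := Nat.exists_eq_add_of_le hk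
  have h2k : 2 * (4 + n) - 1 = 2 * (n + 3) + 1 := by ring_nf; omega
  rw [h2k, Nat.fib_two_mul_add_one]
  have h1 : Nat.fib (4 + n + 1) = Nat.fib (n + 4) + Nat.fib (n + 3) := by
    have : 4 + n + 1 = (n + 3) + 2 := by omega
    rw [this, Nat.fib_add_two]; ring_nf
  have h2 : Nat.fib (n + 4) = Nat.fib (n + 2) + Nat.fib (n + 3) := Nat.fib_add_two
  have h3 : 2 ≤ Nat.fib (n + 3) := by
    calc 2 = Nat.fib 3 := rfl
    _ ≤ Nat.fib (n + 3) := Nat.fib_mono (by omega)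
  have h4 : 1 ≤ Nat.fib (n + 2) := by
    calc 1 = Nat.fib 2 := rfl
    _ ≤ Nat.fib (n + 2) := Nat.fib_mono (by omega)
  rw [h1]
  nlinarith [h2, h3, h4, sq_nonneg (Nat.fib (n+3) - Nat.fib (n+2))]
end

section
/- For all integers k ≥ 4, 3*F_{2k-1} - (F_{k+1} + 1)² = (1/5)*(8*F_{2k-3} + 4*F_{2k-2} - 10*F_{k+1} - 5 - 2*(-1)^k), and this quantity is nonnegative. -/
lemma cassini_aux (m : ℕ) :
    (Nat.fib (m+1) : ℤ) * Nat.fib (m+3) - (Nat.fib (m+2) : ℤ)^2 = (-1)^m := by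
  induction m with
  | zero => simp [Nat.fib]
  | succ n ih =>
    have h1n : Nat.fib (n+3) = Nat.fib (n+1) + Nat.fib (n+2) := Nat.fib_add_two
    have h2n : Nat.fib (n+4) = Nat.fib (n+2) + Nat.fib (n+3) := Nat.fib_add_two
    have h1 : (Nat.fib (n+3) : ℤ) = Nat.fib (n+1) + Nat.fib (n+2) := by exact_mod_cast h1n
    have h2 : (Nat.fib (n+4) : ℤ) = Nat.fib (n+2) + Nat.fib (n+3) := by exact_mod_cast h2n
    rw [show n+1+1 = n+2 from rfl, show n+1+3 = n+4 from rfl, show n+1+2 = n+3 from rfl,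
      h2, h1]
    rw [h1] at ih
    rw [pow_succ]
    linear_combination (-1 : ℤ) * ih

/-- For `k ≥ 4`, `5*(3*F_{2k-1} - (F_{k+1}+1)²) = 8*F_{2k-3} + 4*F_{2k-2} - 10*F_{k+1} - 5 - 2*(-1)^k`,
and `3*F_{2k-1} - (F_{k+1}+1)² ≥ 0`. -/
theorem fib_identity_i (k : ℕ) (hk : 4 ≤ k) :
    5 * (3 * (Nat.fib (2 * k - 1) : ℤ) - ((Nat.fib (k + 1) : ℤ) + 1) ^ 2)
      = 8 * (Nat.fib (2 * k - 3) : ℤ) + 4 * (Nat.fib (2 * k - 2) : ℤ)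
        - 10 * (Nat.fib (k + 1) : ℤ) - 5 - 2 * (-1 : ℤ) ^ k ∧
    0 ≤ 3 * (Nat.fib (2 * k - 1) : ℤ) - ((Nat.fib (k + 1) : ℤ) + 1) ^ 2 := by
  obtain ⟨m, rfl⟩ : ∃ m, k = m + 4 := ⟨k - 4, by omega⟩
  have e1 : 2 * (m + 4) - 1 = 2 * (m + 3) + 1 := by omega
  have e2 : 2 * (m + 4) - 3 = 2 * (m + 2) + 1 := by omega
  have e3 : 2 * (m + 4) - 2 = (m + 2) + (m + 3) + 1 := by omega
  have f1n : Nat.fib (2 * (m + 4) - 1) = Nat.fib (m+4) ^ 2 + Nat.fib (m+3) ^ 2 := by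
    rw [e1, Nat.fib_two_mul_add_one]
  have f2n : Nat.fib (2 * (m + 4) - 3) = Nat.fib (m+3) ^ 2 + Nat.fib (m+2) ^ 2 := by
    rw [e2, Nat.fib_two_mul_add_one]
  have f3n : Nat.fib (2 * (m + 4) - 2)
      = Nat.fib (m+2) * Nat.fib (m+3) + Nat.fib (m+3) * Nat.fib (m+4) := by
    rw [e3, Nat.fib_add (m+2) (m+3)]
  have h4n : Nat.fib (m+4) = Nat.fib (m+2) + Nat.fib (m+3) := Nat.fib_add_two
  have h1n : Nat.fib (m+3) = Nat.fib (m+1) + Nat.fib (m+2) := Nat.fib_add_two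
  have f1 : (Nat.fib (2 * (m + 4) - 1) : ℤ)
      = (Nat.fib (m+4) : ℤ)^2 + (Nat.fib (m+3) : ℤ)^2 := by exact_mod_cast f1n
  have f2 : (Nat.fib (2 * (m + 4) - 3) : ℤ)
      = (Nat.fib (m+3) : ℤ)^2 + (Nat.fib (m+2) : ℤ)^2 := by exact_mod_cast f2n
  have f3 : (Nat.fib (2 * (m + 4) - 2) : ℤ)
      = (Nat.fib (m+2) : ℤ) * Nat.fib (m+3) + (Nat.fib (m+3) : ℤ) * Nat.fib (m+4) := by
    exact_mod_cast f3n
  have h4 : (Nat.fib (m+4) : ℤ) = Nat.fib (m+2) + Nat.fib (m+3) := by exact_mod_cast h4n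
  have h5 : (Nat.fib (m+4+1) : ℤ) = Nat.fib (m+2) + 2 * Nat.fib (m+3) := by
    have h6 : (Nat.fib (m+5) : ℤ) = Nat.fib (m+3) + Nat.fib (m+4) := by
      exact_mod_cast (Nat.fib_add_two : Nat.fib (m+3+2) = _)
    rw [show m+4+1 = m+5 from rfl, h6, h4]; ring
  have h1 : (Nat.fib (m+3) : ℤ) = Nat.fib (m+1) + Nat.fib (m+2) := by exact_mod_cast h1n
  have hc := cassini_aux m
  have hsign : ((-1 : ℤ))^(m+4) = (-1)^m := by rw [pow_add]; norm_num
  have ha : (1 : ℤ) ≤ Nat.fib (m+2) := by exact_mod_cast Nat.fib_pos.2 (by omega)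
  have hb : (2 : ℤ) ≤ Nat.fib (m+3) := by
    have := Nat.fib_mono (show 3 ≤ m + 3 by omega)
    exact_mod_cast this
  have hc2 : ((Nat.fib (m+3) : ℤ) - Nat.fib (m+2)) * Nat.fib (m+3)
      - (Nat.fib (m+2) : ℤ)^2 = (-1)^m := by
    rw [h1]; linear_combination hc + (-(Nat.fib (m+1) : ℤ)) * h1
  rw [f1, f2, f3, h4, h5, hsign]
  constructor
  · linear_combination (-2 : ℤ) * hc2
  · have p1 : 0 ≤ (Nat.fib (m+2) : ℤ) * ((Nat.fib (m+2) : ℤ) - 1) :=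
      mul_nonneg (by linarith) (by linarith)
    have p2 : 0 ≤ (Nat.fib (m+3) : ℤ) * ((Nat.fib (m+3) : ℤ) - 2) :=
      mul_nonneg (by linarith) (by linarith)
    have p3 : (2 : ℤ) ≤ (Nat.fib (m+2) : ℤ) * Nat.fib (m+3) := by
      calc (2 : ℤ) = 1 * 2 := by norm_num
        _ ≤ (Nat.fib (m+2) : ℤ) * Nat.fib (m+3) :=
          mul_le_mul ha hb (by norm_num) (by linarith)
    have key : 3 * (((Nat.fib (m+2) : ℤ) + Nat.fib (m+3)) ^ 2 + (Nat.fib (m+3) : ℤ) ^ 2)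
        - ((Nat.fib (m+2) : ℤ) + 2 * Nat.fib (m+3) + 1) ^ 2
        = 2 * ((Nat.fib (m+2) : ℤ) * ((Nat.fib (m+2) : ℤ) - 1))
          + 2 * ((Nat.fib (m+3) : ℤ) * ((Nat.fib (m+3) : ℤ) - 2))
          + 2 * ((Nat.fib (m+2) : ℤ) * Nat.fib (m+3)) - 1 := by ring
    rw [key]
    linarith [p1, p2, p3]
end

section
/- For integers i ≥ 5 and 3 ≤ j ≤ i-2, define ρ(i,j) = (F_i - F_j - 1)*F_{j-2} - (F_j - 1)*F_{i-2}. Then ρ(i+1,j) - ρ(i,j) = F_{i-3} - (-1)^j * F_{i-j-1} ≥ 0; in particular ρ(i,j) is nondecreasing in i. -/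
lemma fib_aux (c b : ℕ) :
    (Nat.fib (c + b) : ℤ) * Nat.fib (b + 1) - (Nat.fib (c + b + 1) : ℤ) * Nat.fib b
      = (-1) ^ b * Nat.fib c := by
  induction b with
  | zero => simp
  | succ b ih =>
    have h1 : Nat.fib (c + b + 2) = Nat.fib (c + b) + Nat.fib (c + b + 1) := Nat.fib_add_two
    have h2 : Nat.fib (b + 2) = Nat.fib b + Nat.fib (b + 1) := Nat.fib_add_two
    have e0 : c + (b + 1) = c + b + 1 := by ring
    have e1 : c + b + 1 + 1 = c + b + 2 := by ring
    have e2 : b + 1 + 1 = b + 2 := by ring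
    rw [e0, e1, e2, h1, h2]
    push_cast
    rw [pow_succ]
    nlinarith [ih]

/-- For `i ≥ 5`, `3 ≤ j ≤ i-2`, with `ρ(i,j) = (F_i - F_j - 1)*F_{j-2} - (F_j - 1)*F_{i-2}`,
we have `ρ(i+1,j) - ρ(i,j) = F_{i-3} - (-1)^j * F_{i-j-1} ≥ 0`, so `ρ` is
nondecreasing in `i`. -/
theorem rho_increasing (i j : ℕ) (hi : 5 ≤ i) (hj : 3 ≤ j) (hji : j ≤ i - 2) :
    (((Nat.fib (i + 1) : ℤ) - (Nat.fib j : ℤ) - 1) * (Nat.fib (j - 2) : ℤ)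
          - ((Nat.fib j : ℤ) - 1) * (Nat.fib (i - 1) : ℤ))
        - (((Nat.fib i : ℤ) - (Nat.fib j : ℤ) - 1) * (Nat.fib (j - 2) : ℤ)
          - ((Nat.fib j : ℤ) - 1) * (Nat.fib (i - 2) : ℤ))
      = (Nat.fib (i - 3) : ℤ) - (-1 : ℤ) ^ j * (Nat.fib (i - j - 1) : ℤ) ∧
    0 ≤ (Nat.fib (i - 3) : ℤ) - (-1 : ℤ) ^ j * (Nat.fib (i - j - 1) : ℤ) ∧
    ((Nat.fib i : ℤ) - (Nat.fib j : ℤ) - 1) * (Nat.fib (j - 2) : ℤ)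
          - ((Nat.fib j : ℤ) - 1) * (Nat.fib (i - 2) : ℤ)
      ≤ ((Nat.fib (i + 1) : ℤ) - (Nat.fib j : ℤ) - 1) * (Nat.fib (j - 2) : ℤ)
          - ((Nat.fib j : ℤ) - 1) * (Nat.fib (i - 1) : ℤ) := by
  obtain ⟨b, rfl⟩ : ∃ b, j = b + 2 := ⟨j - 2, by omega⟩
  obtain ⟨c, rfl⟩ : ∃ c, i = c + b + 4 := ⟨i - b - 4, by omega⟩
  have e1 : c + b + 4 + 1 = c + b + 5 := by ring
  have e2 : b + 2 - 2 = b := by omega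
  have e3 : c + b + 4 - 1 = c + b + 3 := by omega
  have e4 : c + b + 4 - 2 = c + b + 2 := by omega
  have e5 : c + b + 4 - 3 = c + b + 1 := by omega
  have e6 : c + b + 4 - (b + 2) - 1 = c + 1 := by omega
  rw [e1, e2, e3, e4, e5, e6]
  have h1 : (Nat.fib (c + b + 5) : ℤ) = Nat.fib (c + b + 3) + Nat.fib (c + b + 4) := by
    have : Nat.fib (c + b + 3 + 2) = Nat.fib (c + b + 3) + Nat.fib (c + b + 3 + 1) :=
      Nat.fib_add_two
    exact_mod_cast congrArg (Nat.cast (R := ℤ)) this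
  have h2 : (Nat.fib (c + b + 3) : ℤ) = Nat.fib (c + b + 1) + Nat.fib (c + b + 2) := by
    have : Nat.fib (c + b + 1 + 2) = Nat.fib (c + b + 1) + Nat.fib (c + b + 1 + 1) :=
      Nat.fib_add_two
    exact_mod_cast congrArg (Nat.cast (R := ℤ)) this
  have h3 : (Nat.fib (b + 2) : ℤ) = Nat.fib b + Nat.fib (b + 1) := by
    exact_mod_cast congrArg (Nat.cast (R := ℤ)) (Nat.fib_add_two (n := b))
  have haux := fib_aux (c + 1) b
  have haux' : (Nat.fib (c + b + 1) : ℤ) * Nat.fib (b + 1)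
      - (Nat.fib (c + b + 2) : ℤ) * Nat.fib b = (-1) ^ b * Nat.fib (c + 1) := by
    have : c + 1 + b = c + b + 1 := by ring
    have : c + 1 + b + 1 = c + b + 2 := by ring
    convert haux using 3 <;> ring
  have hpow : ((-1 : ℤ)) ^ (b + 2) = (-1) ^ b := by
    rw [pow_add]; ring
  have hmono : (Nat.fib (c + 1) : ℤ) ≤ Nat.fib (c + b + 1) := by
    exact_mod_cast Nat.fib_mono (by omega)
  have hpos : (0 : ℤ) ≤ Nat.fib (c + 1) := by positivity
  refine ⟨?_, ?_, ?_⟩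
  · rw [hpow, h1, h2, h3]; linarith [haux']
  · rcases Nat.even_or_odd b with hb | hb
    · rw [hpow, hb.neg_one_pow]; linarith
    · rw [hpow, hb.neg_one_pow]; linarith
  · have hfirst : (((Nat.fib (c + b + 5) : ℤ) - (Nat.fib (b + 2) : ℤ) - 1) * (Nat.fib b : ℤ)
          - ((Nat.fib (b + 2) : ℤ) - 1) * (Nat.fib (c + b + 3) : ℤ))
        - (((Nat.fib (c + b + 4) : ℤ) - (Nat.fib (b + 2) : ℤ) - 1) * (Nat.fib b : ℤ)
          - ((Nat.fib (b + 2) : ℤ) - 1) * (Nat.fib (c + b + 2) : ℤ))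
      = (Nat.fib (c + b + 1) : ℤ) - (-1 : ℤ) ^ (b + 2) * (Nat.fib (c + 1) : ℤ) := by
      rw [hpow, h1, h2, h3]; linarith [haux']
    rcases Nat.even_or_odd b with hb | hb
    · rw [hpow, hb.neg_one_pow] at hfirst; linarith
    · rw [hpow, hb.neg_one_pow] at hfirst; linarith
end

section
/- For all integers k ≥ 4, ρ(2k+1, k+1) := (F_{2k+1} - F_{k+1} - 1)*F_{k-1} - (F_{k+1} - 1)*F_{2k-1} equals (1/5)*(L_{2k-2} - 5*F_{k-1} - 5*F_{-k} - 3*(-1)^k), and this quantity is positive. -/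
/-- Uniqueness of solutions of the two-step Fibonacci-type recurrence on `ℤ`. -/
private lemma fib_uniq (g h : ℤ → ℤ)
    (hg : ∀ n : ℤ, g n = g (n - 1) + g (n - 2))
    (hh : ∀ n : ℤ, h n = h (n - 1) + h (n - 2))
    (h0 : g 0 = h 0) (h1 : g 1 = h 1) : ∀ n : ℤ, g n = h n := by
  have key : ∀ n : ℤ, g n = h n ∧ g (n + 1) = h (n + 1) := by
    intro n
    induction n using Int.induction_on with
    | zero => simpa using ⟨h0, h1⟩
    | succ i ih =>
        refine ⟨ih.2, ?_⟩
        have hgs := hg ((i : ℤ) + 1 + 1)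
        have hhs := hh ((i : ℤ) + 1 + 1)
        rw [show (i:ℤ) + 1 + 1 - 1 = i + 1 by ring, show (i:ℤ) + 1 + 1 - 2 = i by ring]
          at hgs hhs
        rw [hgs, hhs, ih.1, ih.2]
    | pred i ih =>
        have hgs := hg (-(i:ℤ) + 1)
        have hhs := hh (-(i:ℤ) + 1)
        rw [show -(i:ℤ) + 1 - 1 = -i by ring, show -(i:ℤ) + 1 - 2 = -i - 1 by ring]
          at hgs hhs
        constructor
        · linarith [ih.1, ih.2]
        · rw [show -(i:ℤ) - 1 + 1 = -i by ring]; exact ih.1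
  intro n
  exact (key n).1

private lemma negOnePow_sub_one (n : ℤ) :
    (Int.negOnePow (n - 1) : ℤ) = -(Int.negOnePow n : ℤ) := by
  rw [Int.negOnePow_sub, Int.negOnePow_one, mul_neg, mul_one, Units.val_neg]

private lemma negOnePow_sub_two (n : ℤ) :
    (Int.negOnePow (n - 2) : ℤ) = (Int.negOnePow n : ℤ) := by
  rw [Int.negOnePow_sub, Int.negOnePow_even 2 ⟨1, by ring⟩, mul_one]

/-- For `k ≥ 4`, with Fibonacci `F` and Lucas `L` extended to all integers,
`5*ρ(2k+1,k+1) = L_{2k-2} - 5*F_{k-1} - 5*F_{-k} - 3*(-1)^k` and `ρ(2k+1,k+1) > 0`,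
where `ρ(2k+1,k+1) = (F_{2k+1} - F_{k+1} - 1)*F_{k-1} - (F_{k+1} - 1)*F_{2k-1}`. -/
theorem rho_odd_case (F L : ℤ → ℤ)
    (hF0 : F 0 = 0) (hF1 : F 1 = 1) (hFrec : ∀ n : ℤ, F n = F (n - 1) + F (n - 2))
    (hL0 : L 0 = 2) (hL1 : L 1 = 1) (hLrec : ∀ n : ℤ, L n = L (n - 1) + L (n - 2)) :
    ∀ k : ℤ, 4 ≤ k →
      5 * ((F (2 * k + 1) - F (k + 1) - 1) * F (k - 1) - (F (k + 1) - 1) * F (2 * k - 1))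
        = L (2 * k - 2) - 5 * F (k - 1) - 5 * F (-k) - 3 * (Int.negOnePow k : ℤ) ∧
      0 < (F (2 * k + 1) - F (k + 1) - 1) * F (k - 1) - (F (k + 1) - 1) * F (2 * k - 1) := by
  -- forward form of the recurrence
  have hstep : ∀ n : ℤ, F (n + 1) = F n + F (n - 1) := by
    intro n
    have h := hFrec (n + 1)
    rwa [show n + 1 - 1 = n by ring, show n + 1 - 2 = n - 1 by ring] at h
  have hFm1 : F (-1) = 1 := by
    have h := hFrec 1
    rw [show (1:ℤ) - 1 = 0 by ring, show (1:ℤ) - 2 = -1 by ring, hF0, hF1] at h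
    linarith
  have hF2 : F 2 = 1 := by
    have h := hFrec 2
    rwa [show (2:ℤ) - 1 = 1 by ring, show (2:ℤ) - 2 = 0 by ring, hF1, hF0, add_zero] at h
  have hF3 : F 3 = 2 := by
    have h := hFrec 3
    rw [show (3:ℤ) - 1 = 2 by ring, show (3:ℤ) - 2 = 1 by ring, hF2, hF1] at h
    linarith
  -- addition formula
  have hadd : ∀ m n : ℤ, F (m + n) = F m * F (n + 1) + F (m - 1) * F n := by
    intro m
    refine fib_uniq (fun n => F (m + n)) (fun n => F m * F (n + 1) + F (m - 1) * F n)
      ?_ ?_ ?_ ?_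
    · intro n
      have h := hFrec (m + n)
      rw [show m + n - 1 = m + (n - 1) by ring, show m + n - 2 = m + (n - 2) by ring] at h
      exact h
    · intro n
      have h1 := hFrec (n + 1)
      rw [show n + 1 - 1 = n by ring, show n + 1 - 2 = n - 1 by ring] at h1
      have h2 := hFrec n
      rw [show n - 1 + 1 = n by ring, show n - 2 + 1 = n - 1 by ring]
      linear_combination F m * h1 + F (m - 1) * h2
    · show F (m + 0) = F m * F (0 + 1) + F (m - 1) * F 0
      rw [add_zero, show (0:ℤ) + 1 = 1 by norm_num, hF1, hF0]
      ring
    · show F (m + 1) = F m * F (1 + 1) + F (m - 1) * F 1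
      rw [show (1:ℤ) + 1 = 2 by norm_num, hF2, hF1]
      have h := hstep m
      linarith
  -- Lucas in terms of Fibonacci
  have hLF : ∀ n : ℤ, L n = F (n - 1) + F (n + 1) := by
    refine fib_uniq L (fun n => F (n - 1) + F (n + 1)) hLrec ?_ ?_ ?_
    · intro n
      have h1 := hFrec (n - 1)
      have h2 := hFrec (n + 1)
      rw [show n + 1 - 1 = n by ring, show n + 1 - 2 = n - 1 by ring] at h2
      rw [show n - 1 + 1 = n by ring, show n - 2 + 1 = n - 1 by ring,
        show n - 2 - 1 = n - 1 - 2 by ring]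
      linear_combination h1 + h2
    · show L 0 = F (0 - 1) + F (0 + 1)
      rw [show (0:ℤ) - 1 = -1 by norm_num, show (0:ℤ) + 1 = 1 by norm_num, hFm1, hF1, hL0]
      norm_num
    · show L 1 = F (1 - 1) + F (1 + 1)
      rw [show (1:ℤ) - 1 = 0 by norm_num, show (1:ℤ) + 1 = 2 by norm_num, hF0, hF2, hL1]
      norm_num
  -- negative index formula
  have hneg : ∀ n : ℤ, F (-n) = -(Int.negOnePow n : ℤ) * F n := by
    have key : ∀ n : ℤ, F n = -(Int.negOnePow n : ℤ) * F (-n) := by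
      refine fib_uniq F (fun n => -(Int.negOnePow n : ℤ) * F (-n)) hFrec ?_ ?_ ?_
      · intro n
        rw [negOnePow_sub_one, negOnePow_sub_two,
          show -(n - 1) = -n + 1 by ring, show -(n - 2) = -n + 1 + 1 by ring]
        have h := hstep (-n + 1)
        rw [show -n + 1 - 1 = -n by ring] at h
        linear_combination ((Int.negOnePow n : ℤ)) * h
      · simp [hF0]
      · simp only [Int.negOnePow_one, show -(1:ℤ) = -1 by norm_num, hFm1]
        simp [hF1]
    intro n
    have h := key n
    have hsq : (Int.negOnePow n : ℤ) * (Int.negOnePow n : ℤ) = 1 := by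
      rcases Int.even_or_odd n with he | ho
      · rw [Int.negOnePow_even n he]; norm_num
      · rw [Int.negOnePow_odd n ho]; norm_num
    calc F (-n) = ((Int.negOnePow n : ℤ) * (Int.negOnePow n : ℤ)) * F (-n) := by
            rw [hsq]; ring
      _ = -(Int.negOnePow n : ℤ) * F n := by rw [h]; ring
  -- Cassini's identity
  have flip : ∀ n : ℤ,
      F n * F (n + 2) - F (n + 1) ^ 2 = -(F (n - 1) * F (n + 1) - F n ^ 2) := by
    intro n
    have h1 := hstep (n + 1)
    rw [show n + 1 - 1 = n by ring, show n + 1 + 1 = n + 2 by ring] at h1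
    have h2 := hstep n
    linear_combination F n * h1 - F (n + 1) * h2
  have hcas : ∀ n : ℤ, F (n - 1) * F (n + 1) - F n ^ 2 = (Int.negOnePow n : ℤ) := by
    intro n
    induction n using Int.induction_on with
    | zero => simp [hF0, hF1, hFm1]
    | succ i ih =>
        have h := flip i
        rw [show (i:ℤ) + 2 = i + 1 + 1 by ring] at h
        rw [show (i:ℤ) + 1 - 1 = (i:ℤ) by ring, h, ih, Int.negOnePow_succ, Units.val_neg]
    | pred i ih =>
        have h := flip (-(i:ℤ) - 1)
        rw [show -(i:ℤ) - 1 + 2 = -(i:ℤ) + 1 by ring, show -(i:ℤ) - 1 + 1 = -(i:ℤ) by ring,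
          show -(i:ℤ) - 1 - 1 = -(i:ℤ) - 2 by ring] at h
        rw [show -(i:ℤ) - 1 - 1 = -(i:ℤ) - 2 by ring, show -(i:ℤ) - 1 + 1 = -(i:ℤ) by ring,
          show (-(i:ℤ) - 1) = -(i:ℤ) - 1 by ring, negOnePow_sub_one]
        linarith [h, ih]
  -- now the main computation
  intro k hk
  set x := F (k - 1) with hx
  set y := F k with hy
  set e := (Int.negOnePow k : ℤ) with he
  have hk1 : F (k + 1) = y + x := by
    have h := hstep k; linarith
  have hk2 : F (k + 2) = x + 2 * y := by
    have h := hstep (k + 1)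
    rw [show k + 1 + 1 = k + 2 by ring, show k + 1 - 1 = k by ring, hk1] at h
    linarith
  have hkm2 : F (k - 2) = y - x := by
    have h := hFrec k; linarith
  have h2k1 : F (2 * k + 1) = y * (x + 2 * y) + x * (y + x) := by
    have h := hadd k (k + 1)
    rw [show k + (k + 1) = 2 * k + 1 by ring, show k + 1 + 1 = k + 2 by ring, hk1, hk2] at h
    exact h
  have h2km1 : F (2 * k - 1) = y * y + x * x := by
    have h := hadd k (k - 1)
    rw [show k + (k - 1) = 2 * k - 1 by ring, show k - 1 + 1 = k by ring] at h
    exact h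
  have h2km3 : F (2 * k - 3) = x * x + (y - x) * (y - x) := by
    have h := hadd (k - 1) (k - 2)
    rw [show k - 1 + (k - 2) = 2 * k - 3 by ring, show k - 2 + 1 = k - 1 by ring,
      show k - 1 - 1 = k - 2 by ring, hkm2] at h
    exact h
  have hL2 : L (2 * k - 2) = F (2 * k - 3) + F (2 * k - 1) := by
    have h := hLF (2 * k - 2)
    rwa [show 2 * k - 2 - 1 = 2 * k - 3 by ring, show 2 * k - 2 + 1 = 2 * k - 1 by ring] at h
  have hFnk : F (-k) = -e * y := hneg k
  have hck : x * (y + x) - y ^ 2 = e := by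
    have h := hcas k
    rw [hk1] at h
    exact h
  -- growth bounds
  have hgrow : ∀ n : ℤ, 2 ≤ n → n - 1 ≤ F n ∧ n ≤ F (n + 1) := by
    intro n hn
    refine Int.le_induction (motive := fun n _ => n - 1 ≤ F n ∧ n ≤ F (n + 1)) ?_ ?_ n hn
    · constructor
      · rw [hF2]; norm_num
      · rw [show (2:ℤ) + 1 = 3 by norm_num, hF3]
    · intro n hn ih
      constructor
      · linarith [ih.2]
      · have h := hstep (n + 1)
        rw [show n + 1 - 1 = n by ring] at h
        have h1 := ih.1; have h2 := ih.2
        linarith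
  have hxb : k - 2 ≤ x := by
    have h := (hgrow (k - 1) (by linarith)).1
    linarith
  have hyb : k - 1 ≤ y := by
    have h := (hgrow k (by linarith)).1
    linarith
  have hdb : k - 3 ≤ y - x := by
    have h := (hgrow (k - 2) (by linarith)).1
    rw [hkm2] at h
    linarith
  constructor
  · rw [h2k1, hk1, hL2, h2km3, h2km1, hFnk]
    linear_combination (5 * y - 3) * hck
  · rw [h2k1, hk1, h2km1]
    rcases Int.even_or_odd k with hpar | hpar
    · have he1 : e = 1 := by rw [he, Int.negOnePow_even k hpar]; rfl
      rw [he1] at hck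
      have key : (y * (x + 2 * y) + x * (y + x) - (y + x) - 1) * x - (y + x - 1) * (y * y + x * x)
          = (y + 1) * (y - x) := by
        linear_combination y * hck
      rw [key]
      have h1 : 0 < y + 1 := by linarith
      have h2 : 0 < y - x := by linarith
      positivity
    · have hk5 : 5 ≤ k := by
        rcases hpar with ⟨m, rfl⟩
        omega
      have he1 : e = -1 := by rw [he, Int.negOnePow_odd k hpar]; rfl
      rw [he1] at hck
      have key : (y * (x + 2 * y) + x * (y + x) - (y + x) - 1) * x - (y + x - 1) * (y * y + x * x)
          = y * (y - x - 2) + (y - x) := by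
        linear_combination y * hck
      rw [key]
      have h1 : 0 ≤ y * (y - x - 2) := by
        apply mul_nonneg <;> linarith
      linarith
end

section
/- For integers i ≥ 2j+2 with j ≥ 1, define ψ(i,j) = (F_i - F_{2j+1})*F_{2j-1} - F_{i-2}*F_{2j+1}. Then ψ(i+1,j) - ψ(i,j) = F_{i-1}*F_{2j-1} - F_{i-3}*F_{2j+1} = F_{i-2j-2} ≥ 0. Moreover, for all k ≥ 1, ψ(6k, k) = (L_{4k-2} - 3)/5 and ψ(6k+5, k+1) = (-L_{4k} - 3)/5. -/
/-- Lucas numbers: `L 0 = 2`, `L 1 = 1`, `L (n+2) = L (n+1) + L n`. -/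
def lucas : ℕ → ℕ
  | 0 => 2
  | 1 => 1
  | n + 2 => lucas (n + 1) + lucas n

lemma fibZ (m a b : ℕ) (h1 : m = a + 2) (h2 : b = a + 1) :
    (Nat.fib m : ℤ) = Nat.fib b + Nat.fib a := by
  subst h1; subst h2; rw [Nat.fib_add_two]; push_cast; ring

lemma fibaddZ (m n m1 n1 k : ℕ) (hk : k = m + n + 1) (hm : m1 = m + 1) (hn : n1 = n + 1) :
    (Nat.fib k : ℤ) = Nat.fib m * Nat.fib n + Nat.fib m1 * Nat.fib n1 := by
  subst hk; subst hm; subst hn; rw [Nat.fib_add]; push_cast; ring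

lemma fibsqZ (k n n1 : ℕ) (hk : k = 2*n+1) (h1 : n1 = n+1) :
    (Nat.fib k : ℤ) = (Nat.fib n1 : ℤ)^2 + (Nat.fib n : ℤ)^2 := by
  subst hk; subst h1; rw [Nat.fib_two_mul_add_one]; push_cast; ring

lemma fibdblZ (k n n1 : ℕ) (hk : k = 2*n) (h1 : n1 = n+1) :
    (Nat.fib k : ℤ) = (Nat.fib n : ℤ) * (2*(Nat.fib n1 : ℤ) - Nat.fib n) := by
  subst hk; subst h1
  have hle : Nat.fib n ≤ 2 * Nat.fib (n+1) := by
    have := Nat.fib_le_fib_succ (n := n); omega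
  rw [Nat.fib_two_mul, Nat.cast_mul, Nat.cast_sub hle]; push_cast; ring

lemma cass2 (s : ℕ) :
    ((Nat.fib (2*s+2) : ℤ))^2 - (Nat.fib (2*s+2) : ℤ) * Nat.fib (2*s+1)
      - ((Nat.fib (2*s+1) : ℤ))^2 = -1 := by
  induction s with
  | zero => norm_num [Nat.fib_one, Nat.fib_two]
  | succ t ih =>
    rw [show 2*(t+1)+2 = 2*t+4 by omega, show 2*(t+1)+1 = 2*t+3 by omega]
    rw [fibZ (2*t+4) (2*t+2) (2*t+3) (by omega) (by omega),
        fibZ (2*t+3) (2*t+1) (2*t+2) (by omega) (by omega)]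
    linear_combination ih

lemma key (n t : ℕ) :
    (Nat.fib (n+2*t+3) : ℤ) * Nat.fib (2*t+1) - (Nat.fib (n+2*t+1) : ℤ) * Nat.fib (2*t+3)
      = Nat.fib n := by
  have hc := cass2 t
  rw [fibaddZ n (2*t+2) (n+1) (2*t+3) (n+2*t+3) (by omega) (by omega) (by omega),
      fibaddZ n (2*t) (n+1) (2*t+1) (n+2*t+1) (by omega) (by omega) (by omega),
      fibZ (2*t+3) (2*t+1) (2*t+2) (by omega) (by omega),
      show (Nat.fib (2*t) : ℤ) = Nat.fib (2*t+2) - Nat.fib (2*t+1) by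
        linear_combination (-1 : ℤ) * fibZ (2*t+2) (2*t) (2*t+1) (by omega) (by omega)]
  linear_combination (-(Nat.fib n : ℤ)) * hc

lemma lucas_eq : ∀ n : ℕ, lucas (n+1) = Nat.fib n + Nat.fib (n+2)
  | 0 => by decide
  | 1 => by decide
  | (n+2) => by
    have ih1 := lucas_eq (n+1)
    have ih0 := lucas_eq n
    have hrec : lucas (n+1+2) = lucas (n+1+1) + lucas (n+1) := rfl
    have e2 : Nat.fib (n+2) = Nat.fib (n+1) + Nat.fib n := by
      rw [Nat.fib_add_two]; omega
    have e3 : Nat.fib (n+3) = Nat.fib (n+2) + Nat.fib (n+1) := by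
      rw [show n+3 = (n+1)+2 by omega, Nat.fib_add_two]
      simp only [show n+1+1 = n+2 by omega]; omega
    have e4 : Nat.fib (n+4) = Nat.fib (n+3) + Nat.fib (n+2) := by
      rw [show n+4 = (n+2)+2 by omega, Nat.fib_add_two]
      simp only [show n+2+1 = n+3 by omega]; omega
    simp only [show n+1+2 = n+3 by omega, show n+1+1 = n+2 by omega,
      show n+2+1 = n+3 by omega, show n+2+2 = n+4 by omega] at ih1 hrec ⊢
    omega

lemma lucasZ (n a c : ℕ) (h : n = a+1) (h2 : c = a+2) :
    (lucas n : ℤ) = Nat.fib a + Nat.fib c := by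
  subst h; subst h2; rw [lucas_eq]; push_cast; ring

lemma part4 (s : ℕ) :
    5 * (((Nat.fib (6*s+6) : ℤ) - Nat.fib (2*s+3)) * Nat.fib (2*s+1)
          - (Nat.fib (6*s+4) : ℤ) * Nat.fib (2*s+3))
        = (lucas (4*s+2) : ℤ) - 3 ∧
    5 * (((Nat.fib (6*s+11) : ℤ) - Nat.fib (2*s+5)) * Nat.fib (2*s+3)
          - (Nat.fib (6*s+9) : ℤ) * Nat.fib (2*s+5))
        = -(lucas (4*s+4) : ℤ) - 3 := by
  have hc := cass2 s
  have h2s3 : (Nat.fib (2*s+3) : ℤ) = Nat.fib (2*s+2) + Nat.fib (2*s+1) :=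
    fibZ (2*s+3) (2*s+1) (2*s+2) (by omega) (by omega)
  have h2s : (Nat.fib (2*s) : ℤ) = Nat.fib (2*s+2) - Nat.fib (2*s+1) := by
    linear_combination (-1 : ℤ) * fibZ (2*s+2) (2*s) (2*s+1) (by omega) (by omega)
  have h2s4 : (Nat.fib (2*s+4) : ℤ) = 2*Nat.fib (2*s+2) + Nat.fib (2*s+1) := by
    rw [fibZ (2*s+4) (2*s+2) (2*s+3) (by omega) (by omega), h2s3]; ring
  have h2s5 : (Nat.fib (2*s+5) : ℤ) = 3*Nat.fib (2*s+2) + 2*Nat.fib (2*s+1) := by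
    rw [fibZ (2*s+5) (2*s+3) (2*s+4) (by omega) (by omega), h2s4, h2s3]; ring
  have h4s1 : (Nat.fib (4*s+1) : ℤ)
      = ((Nat.fib (2*s+2) : ℤ) - Nat.fib (2*s+1))^2 + (Nat.fib (2*s+1) : ℤ)^2 := by
    rw [fibsqZ (4*s+1) (2*s) (2*s+1) (by omega) (by omega), h2s]; ring
  have h4s2 : (Nat.fib (4*s+2) : ℤ)
      = (Nat.fib (2*s+1) : ℤ) * (2*(Nat.fib (2*s+2) : ℤ) - Nat.fib (2*s+1)) :=
    fibdblZ (4*s+2) (2*s+1) (2*s+2) (by omega) (by omega)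
  have h4s3 : (Nat.fib (4*s+3) : ℤ) = (Nat.fib (2*s+1) : ℤ)^2 + (Nat.fib (2*s+2) : ℤ)^2 := by
    rw [fibsqZ (4*s+3) (2*s+1) (2*s+2) (by omega) (by omega)]; ring
  have h4s4 : (Nat.fib (4*s+4) : ℤ)
      = (Nat.fib (2*s+2) : ℤ) * (2*(Nat.fib (2*s+1) : ℤ) + Nat.fib (2*s+2)) := by
    rw [fibdblZ (4*s+4) (2*s+2) (2*s+3) (by omega) (by omega), h2s3]; ring
  have h4s5 : (Nat.fib (4*s+5) : ℤ)
      = (Nat.fib (2*s+2) : ℤ)^2 + ((Nat.fib (2*s+1) : ℤ) + Nat.fib (2*s+2))^2 := by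
    rw [fibsqZ (4*s+5) (2*s+2) (2*s+3) (by omega) (by omega), h2s3]; ring
  have h4s6 : (Nat.fib (4*s+6) : ℤ)
      = (Nat.fib (2*s+2) : ℤ)^2 + ((Nat.fib (2*s+1) : ℤ) + Nat.fib (2*s+2))^2
        + (Nat.fib (2*s+2) : ℤ) * (2*(Nat.fib (2*s+1) : ℤ) + Nat.fib (2*s+2)) := by
    rw [fibZ (4*s+6) (4*s+4) (4*s+5) (by omega) (by omega), h4s5, h4s4]
  have h4s7 : (Nat.fib (4*s+7) : ℤ)
      = 2*(Nat.fib (2*s+2) : ℤ)^2 + 2*((Nat.fib (2*s+1) : ℤ) + Nat.fib (2*s+2))^2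
        + (Nat.fib (2*s+2) : ℤ) * (2*(Nat.fib (2*s+1) : ℤ) + Nat.fib (2*s+2)) := by
    rw [fibZ (4*s+7) (4*s+5) (4*s+6) (by omega) (by omega), h4s6, h4s5]; ring
  have h6s4 : (Nat.fib (6*s+4) : ℤ)
      = (Nat.fib (2*s+1) : ℤ) * (2*(Nat.fib (2*s+2) : ℤ) - Nat.fib (2*s+1)) * Nat.fib (2*s+1)
        + ((Nat.fib (2*s+1) : ℤ)^2 + (Nat.fib (2*s+2) : ℤ)^2) * Nat.fib (2*s+2) := by
    rw [fibaddZ (4*s+2) (2*s+1) (4*s+3) (2*s+2) (6*s+4) (by omega) (by omega) (by omega),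
        h4s2, h4s3]
  have h6s6 : (Nat.fib (6*s+6) : ℤ)
      = ((Nat.fib (2*s+1) : ℤ)^2 + (Nat.fib (2*s+2) : ℤ)^2) * Nat.fib (2*s+2)
        + (Nat.fib (2*s+2) : ℤ) * (2*(Nat.fib (2*s+1) : ℤ) + Nat.fib (2*s+2))
          * ((Nat.fib (2*s+2) : ℤ) + Nat.fib (2*s+1)) := by
    rw [fibaddZ (4*s+3) (2*s+2) (4*s+4) (2*s+3) (6*s+6) (by omega) (by omega) (by omega),
        h4s3, h4s4, h2s3]
  have h6s9 : (Nat.fib (6*s+9) : ℤ)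
      = ((Nat.fib (2*s+2) : ℤ)^2 + ((Nat.fib (2*s+1) : ℤ) + Nat.fib (2*s+2))^2)
          * ((Nat.fib (2*s+2) : ℤ) + Nat.fib (2*s+1))
        + ((Nat.fib (2*s+2) : ℤ)^2 + ((Nat.fib (2*s+1) : ℤ) + Nat.fib (2*s+2))^2
            + (Nat.fib (2*s+2) : ℤ) * (2*(Nat.fib (2*s+1) : ℤ) + Nat.fib (2*s+2)))
          * (2*(Nat.fib (2*s+2) : ℤ) + Nat.fib (2*s+1)) := by
    rw [fibaddZ (4*s+5) (2*s+3) (4*s+6) (2*s+4) (6*s+9) (by omega) (by omega) (by omega),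
        h4s5, h4s6, h2s3, h2s4]
  have h6s11 : (Nat.fib (6*s+11) : ℤ)
      = ((Nat.fib (2*s+2) : ℤ)^2 + ((Nat.fib (2*s+1) : ℤ) + Nat.fib (2*s+2))^2
            + (Nat.fib (2*s+2) : ℤ) * (2*(Nat.fib (2*s+1) : ℤ) + Nat.fib (2*s+2)))
          * (2*(Nat.fib (2*s+2) : ℤ) + Nat.fib (2*s+1))
        + (2*(Nat.fib (2*s+2) : ℤ)^2 + 2*((Nat.fib (2*s+1) : ℤ) + Nat.fib (2*s+2))^2
            + (Nat.fib (2*s+2) : ℤ) * (2*(Nat.fib (2*s+1) : ℤ) + Nat.fib (2*s+2)))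
          * (3*(Nat.fib (2*s+2) : ℤ) + 2*Nat.fib (2*s+1)) := by
    rw [fibaddZ (4*s+6) (2*s+4) (4*s+7) (2*s+5) (6*s+11) (by omega) (by omega) (by omega),
        h4s6, h4s7, h2s4, h2s5]
  have hl1 : (lucas (4*s+2) : ℤ) = Nat.fib (4*s+1) + Nat.fib (4*s+3) :=
    lucasZ (4*s+2) (4*s+1) (4*s+3) (by omega) (by omega)
  have hl2 : (lucas (4*s+4) : ℤ) = Nat.fib (4*s+3) + Nat.fib (4*s+5) :=
    lucasZ (4*s+4) (4*s+3) (4*s+5) (by omega) (by omega)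
  constructor
  · rw [h6s6, h6s4, h2s3, hl1, h4s1, h4s3]
    linear_combination (3 - 5*(Nat.fib (2*s+2) : ℤ)^2 - 5*(Nat.fib (2*s+1) : ℤ)^2) * hc
  · rw [h6s11, h6s9, h2s5, h2s3, hl2, h4s3, h4s5]
    linear_combination (3 - 15*(Nat.fib (2*s+2) : ℤ)^2
      - 20*(Nat.fib (2*s+1) : ℤ)*(Nat.fib (2*s+2) : ℤ)
      - 5*(Nat.fib (2*s+1) : ℤ)^2) * hc

/-- For `i ≥ 2j+2`, `j ≥ 1`, with `ψ(i,j) = (F_i - F_{2j+1})*F_{2j-1} - F_{i-2}*F_{2j+1}`,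
`ψ(i+1,j) - ψ(i,j) = F_{i-1}*F_{2j-1} - F_{i-3}*F_{2j+1} = F_{i-2j-2} ≥ 0`.
Moreover `5*ψ(6k,k) = L_{4k-2} - 3` and `5*ψ(6k+5,k+1) = -L_{4k} - 3` for `k ≥ 1`. -/
theorem psi_properties (i j : ℕ) (hj : 1 ≤ j) (hi : 2 * j + 2 ≤ i) :
    ((((Nat.fib (i + 1) : ℤ) - Nat.fib (2 * j + 1)) * Nat.fib (2 * j - 1)
          - (Nat.fib (i - 1) : ℤ) * Nat.fib (2 * j + 1))
        - (((Nat.fib i : ℤ) - Nat.fib (2 * j + 1)) * Nat.fib (2 * j - 1)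
          - (Nat.fib (i - 2) : ℤ) * Nat.fib (2 * j + 1))
      = (Nat.fib (i - 1) : ℤ) * Nat.fib (2 * j - 1)
          - (Nat.fib (i - 3) : ℤ) * Nat.fib (2 * j + 1)) ∧
    ((Nat.fib (i - 1) : ℤ) * Nat.fib (2 * j - 1)
          - (Nat.fib (i - 3) : ℤ) * Nat.fib (2 * j + 1)
      = (Nat.fib (i - (2 * j + 2)) : ℤ)) ∧
    (0 : ℤ) ≤ (Nat.fib (i - (2 * j + 2)) : ℤ) ∧
    (∀ k : ℕ, 1 ≤ k →
      5 * (((Nat.fib (6 * k) : ℤ) - Nat.fib (2 * k + 1)) * Nat.fib (2 * k - 1)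
            - (Nat.fib (6 * k - 2) : ℤ) * Nat.fib (2 * k + 1))
        = (lucas (4 * k - 2) : ℤ) - 3 ∧
      5 * (((Nat.fib (6 * k + 5) : ℤ) - Nat.fib (2 * (k + 1) + 1)) * Nat.fib (2 * (k + 1) - 1)
            - (Nat.fib (6 * k + 3) : ℤ) * Nat.fib (2 * (k + 1) + 1))
        = -(lucas (4 * k) : ℤ) - 3) := by
  obtain ⟨t, ht⟩ := Nat.exists_eq_add_of_le hj
  obtain ⟨n, hn⟩ := Nat.exists_eq_add_of_le hi
  refine ⟨?_, ?_, ?_, ?_⟩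
  · rw [show i + 1 = n+2*t+5 by omega, show i - 1 = n+2*t+3 by omega,
        show i - 2 = n+2*t+2 by omega, show i - 3 = n+2*t+1 by omega,
        show 2*j+1 = 2*t+3 by omega, show 2*j-1 = 2*t+1 by omega,
        show i = n+2*t+4 by omega]
    rw [fibZ (n+2*t+5) (n+2*t+3) (n+2*t+4) (by omega) (by omega),
        fibZ (n+2*t+3) (n+2*t+1) (n+2*t+2) (by omega) (by omega)]
    ring
  · rw [show i - 1 = n+2*t+3 by omega, show i - 3 = n+2*t+1 by omega,
        show 2*j+1 = 2*t+3 by omega, show 2*j-1 = 2*t+1 by omega,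
        show i - (2*j+2) = n by omega]
    exact key n t
  · positivity
  · intro k hk
    obtain ⟨s, hs⟩ := Nat.exists_eq_add_of_le hk
    rw [show 6*k-2 = 6*s+4 by omega, show 6*k+5 = 6*s+11 by omega,
        show 6*k+3 = 6*s+9 by omega, show 4*k-2 = 4*s+2 by omega,
        show 2*k+1 = 2*s+3 by omega, show 2*k-1 = 2*s+1 by omega,
        show 2*(k+1)+1 = 2*s+5 by omega, show 2*(k+1)-1 = 2*s+3 by omega,
        show 6*k = 6*s+6 by omega, show 4*k = 4*s+4 by omega]
    exact part4 s
end
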